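/- Let u ∈ ℝⁿ with Θ(u) > 0 and let d be the modified Newton direction at u. Then the one-sided directional derivative Θ'(u, d) = lim_{t→0⁺} (Θ(u + t·d) − Θ(u))/t exists and satisfies Θ'(u, d) ≤ −2Θ(u) < 0; in particular, d is a true descent direction for the merit functional Θ at u. -/

import Mathlib

open scoped RealInnerProductSpace
open Filter Topology

noncomputable section

abbrev Euc (n : ℕ) := EuclideanSpace ℝ (Fin n)

variable {n : ℕ}

/-- Componentwise soft-thresholding operator `(S_{γw}(v))_k = sgn(v_k)·max(|v_k| − γw_k, 0)`. -/
def soft (γ : ℝ) (w : Fin n → ℝ) (v : Euc n) : Euc n :=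
  WithLp.toLp 2 (fun k => Real.sign (v k) * max (|v k| - γ * w k) 0)

/-- The map `F(u) = u − S_{γw}(u − γ∇g(u))`. -/
def Fm (g : Euc n → ℝ) (γ : ℝ) (w : Fin n → ℝ) (u : Euc n) : Euc n :=
  u - soft γ w (u - γ • gradient g u)

/-- The merit functional `Θ(u) = ‖F(u)‖₂²`. -/
def Th (g : Euc n → ℝ) (γ : ℝ) (w : Fin n → ℝ) (u : Euc n) : ℝ :=
  ‖Fm g γ w u‖ ^ 2

/-- The Hessian of `g` at `u`, applied to `d`: `∇²g(u)d`. -/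
def hess (g : Euc n → ℝ) (u d : Euc n) : Euc n :=
  fderiv ℝ (gradient g) u d

/-- Standing assumptions on `g`: twice continuously differentiable, Lipschitz continuous
second derivative, and uniform bounds `c₁‖h‖² ≤ ⟨∇²g(u)h, h⟩ ≤ c₂‖h‖²`. -/
structure Assump (n : ℕ) (g : Euc n → ℝ) (c₁ c₂ : ℝ) : Prop where
  contDiff : ContDiff ℝ 2 g
  lipHess : ∃ L : NNReal, LipschitzWith L fun u => fderiv ℝ (gradient g) u
  c1_pos : 0 < c₁
  c1_le_c2 : c₁ ≤ c₂
  lower : ∀ u h : Euc n, c₁ * ‖h‖ ^ 2 ≤ ⟪hess g u h, h⟫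
  upper : ∀ u h : Euc n, ⟪hess g u h, h⟫ ≤ c₂ * ‖h‖ ^ 2

/-- `A⁺(u)`. -/
def Ap (g : Euc n → ℝ) (γ : ℝ) (w : Fin n → ℝ) (u : Euc n) : Set (Fin n) :=
  {k | γ * gradient g u k + γ * w k < u k}

/-- `A⁻(u)`. -/
def Am (g : Euc n → ℝ) (γ : ℝ) (w : Fin n → ℝ) (u : Euc n) : Set (Fin n) :=
  {k | u k < γ * gradient g u k - γ * w k}

/-- `A(u) = A⁺(u) ∪ A⁻(u)`. -/
def Aset (g : Euc n → ℝ) (γ : ℝ) (w : Fin n → ℝ) (u : Euc n) : Set (Fin n) :=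
  Ap g γ w u ∪ Am g γ w u

/-- `I°(u)`. -/
def Iz (g : Euc n → ℝ) (γ : ℝ) (w : Fin n → ℝ) (u : Euc n) : Set (Fin n) :=
  {k | γ * gradient g u k - γ * w k < u k ∧ u k < γ * gradient g u k + γ * w k}

/-- `I⁺(u)`. -/
def Ipl (g : Euc n → ℝ) (γ : ℝ) (w : Fin n → ℝ) (u : Euc n) : Set (Fin n) :=
  {k | u k = γ * gradient g u k + γ * w k}

/-- `I⁻(u)`. -/
def Imi (g : Euc n → ℝ) (γ : ℝ) (w : Fin n → ℝ) (u : Euc n) : Set (Fin n) :=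
  {k | u k = γ * gradient g u k - γ * w k}

/-- `A⁺₊(u)`. -/
def App (g : Euc n → ℝ) (γ : ℝ) (w : Fin n → ℝ) (u : Euc n) : Set (Fin n) :=
  {k | γ * gradient g u k + γ * w k < u k ∧ u k < 0}

/-- `A⁻₋(u)`. -/
def Amm (g : Euc n → ℝ) (γ : ℝ) (w : Fin n → ℝ) (u : Euc n) : Set (Fin n) :=
  {k | 0 < u k ∧ u k < γ * gradient g u k - γ * w k}

/-- `I°₊(u)`. -/
def Izp (g : Euc n → ℝ) (γ : ℝ) (w : Fin n → ℝ) (u : Euc n) : Set (Fin n) :=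
  {k | γ * gradient g u k - γ * w k < u k ∧ u k < γ * gradient g u k + γ * w k ∧
    γ * gradient g u k + γ * w k < 0}

/-- `I°₋(u)`. -/
def Izm (g : Euc n → ℝ) (γ : ℝ) (w : Fin n → ℝ) (u : Euc n) : Set (Fin n) :=
  {k | 0 < γ * gradient g u k - γ * w k ∧ γ * gradient g u k - γ * w k < u k ∧
    u k < γ * gradient g u k + γ * w k}

/-- `Ā⁺(u) = A⁺(u) \ A⁺₊(u)`. -/
def ApBar (g : Euc n → ℝ) (γ : ℝ) (w : Fin n → ℝ) (u : Euc n) : Set (Fin n) :=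
  Ap g γ w u \ App g γ w u

/-- `Ā⁻(u) = A⁻(u) \ A⁻₋(u)`. -/
def AmBar (g : Euc n → ℝ) (γ : ℝ) (w : Fin n → ℝ) (u : Euc n) : Set (Fin n) :=
  Am g γ w u \ Amm g γ w u

/-- `Ā(u) = Ā⁺(u) ∪ Ā⁻(u)`. -/
def ABar (g : Euc n → ℝ) (γ : ℝ) (w : Fin n → ℝ) (u : Euc n) : Set (Fin n) :=
  ApBar g γ w u ∪ AmBar g γ w u

/-- `Ī°(u) = I°(u) \ (I°₊(u) ∪ I°₋(u))`. -/
def IzBar (g : Euc n → ℝ) (γ : ℝ) (w : Fin n → ℝ) (u : Euc n) : Set (Fin n) :=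
  Iz g γ w u \ (Izp g γ w u ∪ Izm g γ w u)

/-- `Ī⁺(u) = I⁺(u) ∪ A⁺₊(u) ∪ I°₊(u)`. -/
def IplBar (g : Euc n → ℝ) (γ : ℝ) (w : Fin n → ℝ) (u : Euc n) : Set (Fin n) :=
  Ipl g γ w u ∪ App g γ w u ∪ Izp g γ w u

/-- `Ī⁻(u) = I⁻(u) ∪ A⁻₋(u) ∪ I°₋(u)`. -/
def ImiBar (g : Euc n → ℝ) (γ : ℝ) (w : Fin n → ℝ) (u : Euc n) : Set (Fin n) :=
  Imi g γ w u ∪ Amm g γ w u ∪ Izm g γ w u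

/-- `d` is a modified Newton direction at `u`. -/
def IsModDir (g : Euc n → ℝ) (γ : ℝ) (w : Fin n → ℝ) (u d : Euc n) : Prop :=
  (∀ k ∈ ABar g γ w u, γ * hess g u d k = - Fm g γ w u k) ∧
  (∀ k ∈ IzBar g γ w u, d k = - u k) ∧
  (∀ k ∈ IplBar g γ w u, 0 ≤ d k + u k ∧ 0 ≤ γ * hess g u d k + Fm g γ w u k ∧
    (d k + u k) * (γ * hess g u d k + Fm g γ w u k) = 0) ∧
  (∀ k ∈ ImiBar g γ w u, d k + u k ≤ 0 ∧ γ * hess g u d k + Fm g γ w u k ≤ 0 ∧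
    (d k + u k) * (γ * hess g u d k + Fm g γ w u k) = 0)

/-- `d` is a B-Newton direction at `u` (unmodified index sets). -/
def IsBDir (g : Euc n → ℝ) (γ : ℝ) (w : Fin n → ℝ) (u d : Euc n) : Prop :=
  (∀ k ∈ Aset g γ w u, γ * hess g u d k = - Fm g γ w u k) ∧
  (∀ k ∈ Iz g γ w u, d k = - u k) ∧
  (∀ k ∈ Ipl g γ w u, 0 ≤ d k + u k ∧ 0 ≤ γ * hess g u d k + Fm g γ w u k ∧
    (d k + u k) * (γ * hess g u d k + Fm g γ w u k) = 0) ∧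
  (∀ k ∈ Imi g γ w u, d k + u k ≤ 0 ∧ γ * hess g u d k + Fm g γ w u k ≤ 0 ∧
    (d k + u k) * (γ * hess g u d k + Fm g γ w u k) = 0)

/-- `t = β^l` where `l` is the smallest nonnegative integer satisfying the Armijo inequality. -/
def ArmijoStepsize (g : Euc n → ℝ) (γ : ℝ) (w : Fin n → ℝ) (β σ : ℝ) (u d : Euc n)
    (t : ℝ) : Prop :=
  ∃ l : ℕ, t = β ^ l ∧
    Th g γ w (u + (β ^ l) • d) ≤ (1 - 2 * σ * β ^ l) * Th g γ w u ∧
    ∀ l' < l, ¬ (Th g γ w (u + (β ^ l') • d) ≤ (1 - 2 * σ * β ^ l') * Th g γ w u)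

/-- The modified B-semismooth Newton iteration with Armijo damping. -/
def ModIter (g : Euc n → ℝ) (γ : ℝ) (w : Fin n → ℝ) (β σ : ℝ)
    (useq dseq : ℕ → Euc n) (tseq : ℕ → ℝ) : Prop :=
  (∀ j, IsModDir g γ w (useq j) (dseq j)) ∧
  (∀ j, ArmijoStepsize g γ w β σ (useq j) (dseq j) (tseq j)) ∧
  (∀ j, useq (j + 1) = useq j + tseq j • dseq j)

/-- The B-semismooth Newton iteration (unmodified index sets) with Armijo damping. -/
def BIter (g : Euc n → ℝ) (γ : ℝ) (w : Fin n → ℝ) (β σ : ℝ)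
    (useq dseq : ℕ → Euc n) (tseq : ℕ → ℝ) : Prop :=
  (∀ j, IsBDir g γ w (useq j) (dseq j)) ∧
  (∀ j, ArmijoStepsize g γ w β σ (useq j) (dseq j) (tseq j)) ∧
  (∀ j, useq (j + 1) = useq j + tseq j • dseq j)


/-!
Along the ray `t ↦ u + t • d`, the coordinate `F_k` is `u_k + t d_k` minus the soft-thresholding
map applied to the smooth function `t ↦ (u + t d)_k - γ (∇g(u + t d))_k`. Soft-thresholding is
piecewise linear, so `F` has a right derivative `F'(u; d)` at `t = 0` and
`Θ'(u; d) = 2⟪F(u), F'(u; d)⟫`. The modified index sets are arranged so that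
`F_k(u) (F'_k(u; d) + F_k(u)) ≤ 0` in every coordinate. On `A(u)` the derivative is
`γ(∇²g(u)d)_k` and on `I°(u)` it is `d_k`: the Newton equations give equality on `Ā(u)` and `Ī°(u)`,
and on the indices moved into `Ī⁺(u)`, `Ī⁻(u)` the sign conditions give the inequality.
On `I⁺(u)` and `I⁻(u)` complementarity forces `F'_k(u; d) = -F_k(u)`.
Summing over `k` gives `Θ'(u; d) ≤ -2Θ(u)`.
-/

open Set

theorem sign_mul_max_abs_sub {b : ℝ} (hb : 0 ≤ b) (x : ℝ) :
    Real.sign x * max (|x| - b) 0 = max (x - b) 0 - max (-x - b) 0 := by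
  rcases lt_trichotomy x 0 with hx | rfl | hx
  · rw [Real.sign_of_neg hx, abs_of_neg hx, max_eq_right (by linarith : x - b ≤ 0)]
    ring
  · simp [hb]
  · rw [Real.sign_of_pos hx, abs_of_pos hx, max_eq_right (by linarith : -x - b ≤ 0)]
    ring

theorem max_sub_zero_of_mul_eq_zero {p q : ℝ} (hp : 0 ≤ p) (hq : 0 ≤ q) (hpq : p * q = 0) :
    max (p - q) 0 = p := by
  rcases mul_eq_zero.1 hpq with rfl | rfl
  · simpa using hq
  · simpa using hp

/-- The right derivative at `0` of `t ↦ max (c + t s) 0`. -/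
def rightDerivMaxZero (c s : ℝ) : ℝ :=
  if 0 < c then s else if c < 0 then 0 else max s 0

theorem rightDerivMaxZero_of_pos {c : ℝ} (hc : 0 < c) (s : ℝ) : rightDerivMaxZero c s = s :=
  if_pos hc

theorem rightDerivMaxZero_of_neg {c : ℝ} (hc : c < 0) (s : ℝ) : rightDerivMaxZero c s = 0 := by
  rw [rightDerivMaxZero, if_neg hc.not_gt, if_pos hc]

theorem rightDerivMaxZero_zero (s : ℝ) : rightDerivMaxZero 0 s = max s 0 := by
  simp [rightDerivMaxZero]

theorem HasDerivWithinAt.max_zero_Ioi {φ : ℝ → ℝ} {s x : ℝ}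
    (hφ : HasDerivWithinAt φ s (Ioi x) x) :
    HasDerivWithinAt (fun t => max (φ t) 0) (rightDerivMaxZero (φ x) s) (Ioi x) x := by
  unfold rightDerivMaxZero
  split_ifs with hpos hneg
  · refine hφ.congr_of_eventuallyEq ?_ (max_eq_left hpos.le)
    filter_upwards [hφ.continuousWithinAt.eventually (lt_mem_nhds hpos)] with t ht
    exact max_eq_left ht.le
  · refine (hasDerivWithinAt_const x _ 0).congr_of_eventuallyEq ?_ (max_eq_right hneg.le)
    filter_upwards [hφ.continuousWithinAt.eventually (gt_mem_nhds hneg)] with t ht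
    exact max_eq_right ht.le
  · have h0 : φ x = 0 := le_antisymm (not_lt.1 hpos) (not_lt.1 hneg)
    rw [hasDerivWithinAt_iff_tendsto_slope' self_notMem_Ioi] at hφ ⊢
    refine (hφ.max tendsto_const_nhds).congr' ?_
    filter_upwards [self_mem_nhdsWithin] with t (ht : x < t)
    rw [slope_def_field, slope_def_field, h0, max_self, sub_zero, sub_zero,
      ← max_div_div_right (sub_pos.2 ht).le, zero_div]

theorem hasDerivWithinAt_euclidean {ι : Type*} [Fintype ι] {f : ℝ → EuclideanSpace ℝ ι}
    {f' : EuclideanSpace ℝ ι} {s : Set ℝ} {x : ℝ} :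
    HasDerivWithinAt f f' s x ↔ ∀ i, HasDerivWithinAt (fun t => f t i) (f' i) s x := by
  refine ⟨fun h i => ?_, fun h => ?_⟩
  · exact (EuclideanSpace.proj i).hasFDerivAt.comp_hasDerivWithinAt x h
  · simpa [Function.comp_def] using
      (PiLp.continuousLinearEquiv 2 ℝ (fun _ : ι => ℝ)).symm.hasFDerivAt.comp_hasDerivWithinAt x
        (hasDerivWithinAt_pi.2 h)

theorem ContDiff.differentiable_gradient {F : Type*} [NormedAddCommGroup F]
    [InnerProductSpace ℝ F] [CompleteSpace F] {f : F → ℝ} (hf : ContDiff ℝ 2 f) :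
    Differentiable ℝ (gradient f) :=
  (InnerProductSpace.toDual ℝ F).symm.toContinuousLinearEquiv.differentiable.comp
    ((hf.fderiv_right (m := 1) (by norm_num)).differentiable one_ne_zero)

section DirectionalDerivative

variable {g : Euc n → ℝ} {γ : ℝ} {w : Fin n → ℝ} {u d : Euc n} {k : Fin n}

theorem Fm_apply (hb : 0 ≤ γ * w k) (x : Euc n) :
    Fm g γ w x k = x k - (max (x k - γ * gradient g x k - γ * w k) 0 -
      max (-(x k - γ * gradient g x k) - γ * w k) 0) := by
  simp [Fm, soft, sign_mul_max_abs_sub hb]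

variable (g γ w u d) in
/-- The right directional derivative `F'(u; d)` of `F` at `u` along `d`. -/
def FmDirDeriv : Euc n :=
  WithLp.toLp 2 fun k =>
    d k - rightDerivMaxZero (u k - γ * gradient g u k - γ * w k) (d k - γ * hess g u d k) +
      rightDerivMaxZero (-(u k - γ * gradient g u k) - γ * w k) (-(d k - γ * hess g u d k))

theorem FmDirDeriv_apply : FmDirDeriv g γ w u d k =
    d k - rightDerivMaxZero (u k - γ * gradient g u k - γ * w k) (d k - γ * hess g u d k) +
      rightDerivMaxZero (-(u k - γ * gradient g u k) - γ * w k) (-(d k - γ * hess g u d k)) :=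
  rfl

theorem hasDerivAt_gradient_apply_line (hg : ContDiff ℝ 2 g) :
    HasDerivAt (fun t : ℝ => gradient g (u + t • d) k) (hess g u d k) 0 := by
  have hline : HasDerivAt (fun t : ℝ => u + t • d) d 0 := by
    simpa using ((hasDerivAt_id (0 : ℝ)).smul_const d).const_add u
  have := (hg.differentiable_gradient (u + (0 : ℝ) • d)).hasFDerivAt.comp_hasDerivAt 0 hline
  simpa [hess, Function.comp_def] using (EuclideanSpace.proj k).hasFDerivAt.comp_hasDerivAt 0 this

theorem hasDerivWithinAt_Fm_line (hg : ContDiff ℝ 2 g) (hb : ∀ k, 0 ≤ γ * w k) :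
    HasDerivWithinAt (fun t : ℝ => Fm g γ w (u + t • d)) (FmDirDeriv g γ w u d) (Ioi 0) 0 := by
  refine hasDerivWithinAt_euclidean.2 fun k => ?_
  have hcoord : HasDerivAt (fun t : ℝ => (u + t • d) k) (d k) 0 := by
    simpa using ((hasDerivAt_id (0 : ℝ)).mul_const (d k)).const_add (u k)
  have hφ : HasDerivWithinAt (fun t : ℝ => (u + t • d) k - γ * gradient g (u + t • d) k)
      (d k - γ * hess g u d k) (Ioi 0) 0 :=
    (hcoord.sub ((hasDerivAt_gradient_apply_line hg).const_mul γ)).hasDerivWithinAt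
  have hmax₁ := (hφ.sub_const (γ * w k)).max_zero_Ioi
  have hmax₂ := (hφ.neg.sub_const (γ * w k)).max_zero_Ioi
  simp only [Pi.neg_apply, zero_smul, add_zero] at hmax₁ hmax₂
  simp_rw [Fm_apply (hb k)]
  exact (hcoord.hasDerivWithinAt.sub (hmax₁.sub hmax₂)).congr_deriv
    (by rw [FmDirDeriv_apply]; ring)

theorem IsModDir.Fm_mul_FmDirDeriv_le_of_mem_Aset (hd : IsModDir g γ w u d)
    (hb : 0 < γ * w k) (hk : k ∈ Aset g γ w u) :
    Fm g γ w u k * FmDirDeriv g γ w u d k ≤ -Fm g γ w u k ^ 2 := by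
  obtain ⟨hA, -, hIpl, hImi⟩ := hd
  have hF := Fm_apply (g := g) hb.le u
  rw [FmDirDeriv_apply]
  set a := γ * gradient g u k
  set b := γ * w k
  set F := Fm g γ w u k
  rcases hk with hk | hk
  · replace hk : a + b < u k := hk
    have hFab : F = a + b := by
      rw [hF, max_eq_left (by linarith), max_eq_right (by linarith)]; ring
    rw [rightDerivMaxZero_of_pos (by linarith), rightDerivMaxZero_of_neg (by linarith)]
    by_cases hu : u k < 0
    · have hq := (hIpl k (Or.inl (Or.inr (show a + b < u k ∧ u k < 0 from ⟨hk, hu⟩)))).2.1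
      nlinarith
    · have hM := hA k (Or.inl (And.intro hk fun h => hu h.2))
      nlinarith
  · replace hk : u k < a - b := hk
    have hFab : F = a - b := by
      rw [hF, max_eq_right (by linarith), max_eq_left (by linarith)]; ring
    rw [rightDerivMaxZero_of_neg (by linarith), rightDerivMaxZero_of_pos (by linarith)]
    by_cases hu : 0 < u k
    · have hq := (hImi k (Or.inl (Or.inr (show 0 < u k ∧ u k < a - b from ⟨hu, hk⟩)))).2.1
      nlinarith
    · have hM := hA k (Or.inr (And.intro hk fun h => hu h.1))
      nlinarith

theorem IsModDir.Fm_mul_FmDirDeriv_le_of_mem_Ipl_union_Imi (hd : IsModDir g γ w u d)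
    (hb : 0 < γ * w k) (hk : k ∈ Ipl g γ w u ∪ Imi g γ w u) :
    Fm g γ w u k * FmDirDeriv g γ w u d k ≤ -Fm g γ w u k ^ 2 := by
  obtain ⟨-, -, hIpl, hImi⟩ := hd
  have hF := Fm_apply (g := g) hb.le u
  rw [FmDirDeriv_apply]
  set a := γ * gradient g u k
  set b := γ * w k
  set M := γ * hess g u d k
  set F := Fm g γ w u k
  rcases hk with hk | hk
  · replace hk : u k = a + b := hk
    have hFu : F = u k := by
      rw [hF, hk, add_sub_cancel_left, sub_self, max_self, max_eq_right (by linarith)]; ring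
    rw [hk, add_sub_cancel_left, sub_self, rightDerivMaxZero_zero,
      rightDerivMaxZero_of_neg (by linarith)]
    obtain ⟨hp, hq, hpq⟩ := hIpl k (Or.inl (Or.inl hk))
    rw [← hFu] at hp hpq
    rw [show d k - M = (d k + F) - (M + F) by ring, max_sub_zero_of_mul_eq_zero hp hq hpq]
    nlinarith
  · replace hk : u k = a - b := hk
    have hFu : F = u k := by
      rw [hF, hk, sub_sub_cancel_left, neg_neg, sub_self, max_self, max_eq_right (by linarith)]
      ring
    rw [hk, sub_sub_cancel_left, neg_neg, sub_self, rightDerivMaxZero_zero,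
      rightDerivMaxZero_of_neg (by linarith)]
    obtain ⟨hp, hq, hpq⟩ := hImi k (Or.inl (Or.inl hk))
    rw [← hFu] at hp hpq
    rw [show -(d k - M) = -(d k + F) - -(M + F) by ring,
      max_sub_zero_of_mul_eq_zero (by linarith) (by linarith) (by linarith)]
    nlinarith

theorem IsModDir.Fm_mul_FmDirDeriv_le_of_mem_Iz (hd : IsModDir g γ w u d)
    (hb : 0 < γ * w k) (hk : k ∈ Iz g γ w u) :
    Fm g γ w u k * FmDirDeriv g γ w u d k ≤ -Fm g γ w u k ^ 2 := by
  obtain ⟨-, hI, hIpl, hImi⟩ := hd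
  have hF := Fm_apply (g := g) hb.le u
  rw [FmDirDeriv_apply]
  set a := γ * gradient g u k
  set b := γ * w k
  obtain ⟨hk₁, hk₂⟩ : a - b < u k ∧ u k < a + b := hk
  have hFu : Fm g γ w u k = u k := by
    rw [hF, max_eq_right (by linarith), max_eq_right (by linarith)]; ring
  rw [rightDerivMaxZero_of_neg (by linarith), rightDerivMaxZero_of_neg (by linarith), hFu]
  by_cases hab : a + b < 0
  · have hp := (hIpl k (Or.inr (show a - b < u k ∧ u k < a + b ∧ a + b < 0 from
      ⟨hk₁, hk₂, hab⟩))).1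
    nlinarith
  by_cases hab' : 0 < a - b
  · have hp := (hImi k (Or.inr (show 0 < a - b ∧ a - b < u k ∧ u k < a + b from
      ⟨hab', hk₁, hk₂⟩))).1
    nlinarith
  have hd := hI k (And.intro ⟨hk₁, hk₂⟩ fun h => h.elim (fun h => hab h.2.2) fun h => hab' h.1)
  nlinarith

theorem IsModDir.Fm_mul_FmDirDeriv_le (hd : IsModDir g γ w u d) (hb : 0 < γ * w k) :
    Fm g γ w u k * FmDirDeriv g γ w u d k ≤ -Fm g γ w u k ^ 2 := by
  by_cases hA : k ∈ Aset g γ w u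
  · exact hd.Fm_mul_FmDirDeriv_le_of_mem_Aset hb hA
  by_cases hI : k ∈ Ipl g γ w u ∪ Imi g γ w u
  · exact hd.Fm_mul_FmDirDeriv_le_of_mem_Ipl_union_Imi hb hI
  simp only [Aset, Ap, Am, Ipl, Imi, mem_union, mem_ofPred_eq, not_or, not_lt] at hA hI
  exact hd.Fm_mul_FmDirDeriv_le_of_mem_Iz hb
    ⟨lt_of_le_of_ne hA.2 (Ne.symm hI.2), lt_of_le_of_ne hA.1 hI.1⟩

theorem IsModDir.inner_Fm_FmDirDeriv_le (hd : IsModDir g γ w u d) (hb : ∀ k, 0 < γ * w k) :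
    ⟪Fm g γ w u, FmDirDeriv g γ w u d⟫ ≤ -Th g γ w u := by
  rw [Th, EuclideanSpace.real_norm_sq_eq, ← Finset.sum_neg_distrib, PiLp.inner_apply]
  exact Finset.sum_le_sum fun k _ => by
    simpa [mul_comm] using hd.Fm_mul_FmDirDeriv_le (hb k)

theorem hasDerivWithinAt_Th_line (hg : ContDiff ℝ 2 g) (hb : ∀ k, 0 ≤ γ * w k) :
    HasDerivWithinAt (fun t : ℝ => Th g γ w (u + t • d))
      (2 * ⟪Fm g γ w u, FmDirDeriv g γ w u d⟫) (Ioi 0) 0 := by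
  simpa only [Th, zero_smul, add_zero] using (hasDerivWithinAt_Fm_line hg hb).norm_sq

end DirectionalDerivative

theorem stmt8_general {n : ℕ} (c₁ c₂ : ℝ) (g : Euc n → ℝ) (hg : Assump n g c₁ c₂)
    (w : Fin n → ℝ) (hw : ∀ k, 0 < w k) (γ : ℝ) (hγ : 0 < γ)
    (u d : Euc n) (hpos : 0 < Th g γ w u) (hd : IsModDir g γ w u d) :
    ∃ DTh : ℝ,
      Tendsto (fun t : ℝ => (Th g γ w (u + t • d) - Th g γ w u) / t) (𝓝[>] 0) (𝓝 DTh) ∧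
      DTh ≤ -2 * Th g γ w u ∧ DTh < 0 := by
  have hb : ∀ k, 0 < γ * w k := fun k => mul_pos hγ (hw k)
  have hderiv := hasDerivWithinAt_Th_line (u := u) (d := d) hg.contDiff fun k => (hb k).le
  have hdesc := hd.inner_Fm_FmDirDeriv_le hb
  refine ⟨2 * ⟪Fm g γ w u, FmDirDeriv g γ w u d⟫, ?_, by linarith, by linarith⟩
  rw [hasDerivWithinAt_iff_tendsto_slope' self_notMem_Ioi] at hderiv
  refine hderiv.congr fun t => ?_
  simp [slope_def_field]

/-- descent property of the modified Newton direction w.r.t. `Θ`. -/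
theorem stmt8 {n : ℕ} (hn : 1 ≤ n) (c₁ c₂ : ℝ) (g : Euc n → ℝ) (hg : Assump n g c₁ c₂)
    (w : Fin n → ℝ) (hw : ∀ k, 0 < w k) (γ : ℝ) (hγ : 0 < γ)
    (u d : Euc n) (hpos : 0 < Th g γ w u) (hd : IsModDir g γ w u d) :
    ∃ DTh : ℝ,
      Tendsto (fun t : ℝ => (Th g γ w (u + t • d) - Th g γ w u) / t) (𝓝[>] 0) (𝓝 DTh) ∧
      DTh ≤ -2 * Th g γ w u ∧ DTh < 0 :=
  stmt8_general c₁ c₂ g hg w hw γ hγ u d hpos hd
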